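/- Let K be an abstract elementary class satisfying the joint embedding and amalgamation properties. Let ⟨M^i | i < μ⁺⟩ be an increasing chain of models of cardinality μ, let N ≺_K M^0, and let a be an element such that for every i < μ⁺ the Galois type tp(a/M^i) does not μ-split over N. Then tp(a/⋃_{i<μ⁺} M^i) does not μ-split over N. -/

import Mathlib

universe u

open Cardinal

/-- An abstract elementary class `K`, presented inside a monster (large,
model-homogeneous universal) model with underlying set `Ω`.  `G` is the group
of automorphisms of the monster, `Model` is the class of (small) models of `K`,
viewed as subsets of `Ω`, `strong` is the strong-submodel relation `≺_K`, and
`LS` is the Löwenheim–Skolem number of `K`. -/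
structure AEC : Type (u + 1) where
  Ω : Type u
  G : Subgroup (Equiv.Perm Ω)
  Model : Set (Set Ω)
  strong : Set Ω → Set Ω → Prop
  LS : Cardinal.{u}
  aleph0_le_LS : Cardinal.aleph0 ≤ LS
  strong_sub : ∀ M N, strong M N → M ⊆ N
  strong_refl : ∀ M ∈ Model, strong M M
  strong_trans : ∀ M N P, strong M N → strong N P → strong M P
  strong_model_left : ∀ M N, strong M N → M ∈ Model
  strong_model_right : ∀ M N, strong M N → N ∈ Model
  coherence : ∀ M N P, strong M P → strong N P → M ⊆ N → strong M N
  union_strong : ∀ (θ : Ordinal.{u}) (c : Ordinal.{u} → Set Ω), θ ≠ 0 →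
    (∀ i, i < θ → c i ∈ Model) →
    (∀ i j, i < j → j < θ → strong (c i) (c j)) →
    (⋃ i, ⋃ (_ : i < θ), c i) ∈ Model ∧
      ∀ i, i < θ → strong (c i) (⋃ i, ⋃ (_ : i < θ), c i)
  g_model : ∀ g ∈ G, ∀ M ∈ Model, (g : Ω → Ω) '' M ∈ Model
  g_strong : ∀ g ∈ G, ∀ M N, strong M N → strong ((g : Ω → Ω) '' M) ((g : Ω → Ω) '' N)
  lowenheim : ∀ M ∈ Model, ∀ A : Set Ω, A ⊆ M →
    ∃ N ∈ Model, A ⊆ N ∧ strong N M ∧ #N ≤ max #A LS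

namespace AEC

variable (K : AEC.{u})

/-- Equality of Galois types: `tp(a/M) = tp(b/M)`, witnessed by an automorphism
of the monster fixing `M` pointwise.  (A Galois type over `M` is represented by
an element of the monster realizing it.) -/
def eqTp (a b : K.Ω) (M : Set K.Ω) : Prop :=
  ∃ g ∈ K.G, (∀ x ∈ M, (g : K.Ω → K.Ω) x = x) ∧ g a = b

/-- `M` is universal over `N`: every extension of `N` of the same cardinality
as `N` embeds into `M` over `N`. -/
def UniversalOver (M N : Set K.Ω) : Prop :=
  K.strong N M ∧
    ∀ N' : Set K.Ω, N' ∈ K.Model → K.strong N N' → #N' = #N →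
      ∃ g ∈ K.G, (∀ x ∈ N, (g : K.Ω → K.Ω) x = x) ∧
        K.strong ((g : K.Ω → K.Ω) '' N') M

/-- `M` is a `(μ, θ)`-limit model over `N`: `M` is the union of an increasing
continuous chain of models of cardinality `μ` starting at `N`, with each
successor universal over its predecessor. -/
def IsLimitChainOver (μ : Cardinal.{u}) (θ : Ordinal.{u}) (M N : Set K.Ω) : Prop :=
  ∃ c : Ordinal.{u} → Set K.Ω,
    c 0 = N ∧
    M = (⋃ i, ⋃ (_ : i < θ), c i) ∧
    (∀ i, i < θ → c i ∈ K.Model ∧ #(c i) = μ) ∧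
    (∀ i j, i < j → j < θ → K.strong (c i) (c j)) ∧
    (∀ i, i + 1 < θ → K.UniversalOver (c (i + 1)) (c i)) ∧
    (∀ i, i < θ → Order.IsSuccLimit i → c i = ⋃ j, ⋃ (_ : j < i), c j)

/-- `M` is a `(μ, θ)`-limit model. -/
def IsLimitChain (μ : Cardinal.{u}) (θ : Ordinal.{u}) (M : Set K.Ω) : Prop :=
  ∃ N, K.IsLimitChainOver μ θ M N

/-- `M` is a limit model of cardinality `μ` over `N`, i.e. a `(μ, θ)`-limit
model over `N` for some limit ordinal `θ < μ⁺`. -/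
def IsLimitModelOver (μ : Cardinal.{u}) (M N : Set K.Ω) : Prop :=
  ∃ θ : Ordinal.{u}, Order.IsSuccLimit θ ∧ θ < (Order.succ μ).ord ∧ K.IsLimitChainOver μ θ M N

/-- `M` is a limit model of cardinality `μ`. -/
def IsLimitModel (μ : Cardinal.{u}) (M : Set K.Ω) : Prop :=
  ∃ N, K.IsLimitModelOver μ M N

/-- `tp(a/M)` `μ`-splits over `N`: there are `N₁, N₂ ≺_K M` of cardinality `μ`
containing `N` and an isomorphism `h : N₁ ≅ N₂` over `N` (the restriction of a
monster automorphism) with `h(tp(a/N₁)) ≠ tp(a/N₂)`. -/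
def Splits (μ : Cardinal.{u}) (a : K.Ω) (M N : Set K.Ω) : Prop :=
  ∃ N₁ N₂ : Set K.Ω, ∃ g ∈ K.G,
    N₁ ∈ K.Model ∧ N₂ ∈ K.Model ∧
    K.strong N₁ M ∧ K.strong N₂ M ∧
    #N₁ = μ ∧ #N₂ = μ ∧
    N ⊆ N₁ ∧ N ⊆ N₂ ∧
    (∀ x ∈ N, (g : K.Ω → K.Ω) x = x) ∧
    (g : K.Ω → K.Ω) '' N₁ = N₂ ∧
    ¬ K.eqTp ((g : K.Ω → K.Ω) a) a N₂

/-- `K` is Galois-stable in `μ`: over any model of cardinality `μ` there are at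
most `μ` Galois types. -/
def Stable (μ : Cardinal.{u}) : Prop :=
  ∀ M ∈ K.Model, #M = μ →
    ∃ S : Set K.Ω, #S ≤ μ ∧ ∀ a : K.Ω, ∃ b ∈ S, K.eqTp a b M

/-- `K` is `μ`-superstable: `K` is Galois-stable in `μ` and for every infinite
ordinal `α`, every increasing chain of limit models of cardinality `μ` with
each successor universal over its predecessor, and every Galois type `p` over
the union, there is a member of the chain over which `p` does not `μ`-split. -/
def Superstable (μ : Cardinal.{u}) : Prop :=
  K.Stable μ ∧
    ∀ (α : Ordinal.{u}) (c : Ordinal.{u} → Set K.Ω),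
      Ordinal.omega0 ≤ α →
      (∀ i, i < α → K.IsLimitModel μ (c i) ∧ #(c i) = μ) →
      (∀ i j, i < j → j < α → K.strong (c i) (c j)) →
      (∀ i, i + 1 < α → K.UniversalOver (c (i + 1)) (c i)) →
      ∀ a : K.Ω, ∃ i, i < α ∧ ¬ K.Splits μ a (⋃ j, ⋃ (_ : j < α), c j) (c i)

/-- `K` has symmetry for non-`μ`-splitting (`μ`-symmetry). -/
def Symmetry (μ : Cardinal.{u}) : Prop :=
  ∀ M M₀ N : Set K.Ω, ∀ a b : K.Ω,
    M ∈ K.Model → M₀ ∈ K.Model → N ∈ K.Model →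
    #M = μ → #M₀ = μ → #N = μ →
    K.UniversalOver M M₀ →
    K.IsLimitModelOver μ M₀ N →
    a ∈ M → a ∉ M₀ →
    ¬ K.Splits μ a M₀ N →
    b ∉ M →
    ¬ K.Splits μ b M M₀ →
    ∃ Mb : Set K.Ω, K.IsLimitModelOver μ Mb M₀ ∧ b ∈ Mb ∧ ¬ K.Splits μ a Mb N

/-- `M` is `λ`-saturated: `M` realizes every Galois type over every strong
submodel of `M` of cardinality `< λ`. -/
def Saturated (lam : Cardinal.{u}) (M : Set K.Ω) : Prop :=
  ∀ N : Set K.Ω, N ∈ K.Model → K.strong N M → #N < lam →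
    ∀ a : K.Ω, ∃ b ∈ M, K.eqTp a b N

/-- `K` has the joint embedding property. -/
def JEP : Prop :=
  ∀ M N, M ∈ K.Model → N ∈ K.Model →
    ∃ P ∈ K.Model, K.strong N P ∧
      ∃ g ∈ K.G, K.strong ((g : K.Ω → K.Ω) '' M) P

/-- `K` has the amalgamation property. -/
def AP : Prop :=
  ∀ M M₁ M₂, K.strong M M₁ → K.strong M M₂ →
    ∃ P ∈ K.Model, K.strong M₂ P ∧
      ∃ g ∈ K.G, (∀ x ∈ M, (g : K.Ω → K.Ω) x = x) ∧
        K.strong ((g : K.Ω → K.Ω) '' M₁) P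

/-- `K` has no maximal models of cardinality `λ`. -/
def NoMaxModels (lam : Cardinal.{u}) : Prop :=
  ∀ M ∈ K.Model, #M = lam → ∃ M' ∈ K.Model, K.strong M M' ∧ M ≠ M'

/-- `M₁` and `M₂` are isomorphic over `N`. -/
def IsoOver (M₁ M₂ N : Set K.Ω) : Prop :=
  ∃ g ∈ K.G, (∀ x ∈ N, (g : K.Ω → K.Ω) x = x) ∧ (g : K.Ω → K.Ω) '' M₁ = M₂

/-- `K` is categorical in `λ`: there is exactly one model of cardinality `λ`
up to isomorphism. -/
def Categorical (lam : Cardinal.{u}) : Prop :=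
  (∃ M ∈ K.Model, #M = lam) ∧
    ∀ M N, M ∈ K.Model → N ∈ K.Model → #M = lam → #N = lam →
      ∃ g ∈ K.G, (g : K.Ω → K.Ω) '' M = N

/-- `K` has arbitrarily large models. -/
def ArbitrarilyLarge : Prop :=
  ∀ lam : Cardinal.{u}, ∃ M ∈ K.Model, lam ≤ #M

end AEC

/-! The two models witnessing a `μ`-splitting of `tp(a/⋃ M^i)` have cardinality `μ`, so each
lies in a single `M^i`: by regularity of `μ⁺` when `μ` is infinite, and because the chain
has a last member when `μ` is finite. By coherence they are then strong submodels of that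
`M^i`, where the same automorphism witnesses that `tp(a/M^i)` `μ`-splits over `N`. -/

open Set

section ChainUnion

variable {α : Type u} {M : Ordinal.{u} → Set α} {S : Set α}

theorem exists_subset_of_subset_biUnion_of_mk_lt_cof {θ : Ordinal.{u}}
    (hM : MonotoneOn M (Iio θ)) (hS : S ⊆ ⋃ i, ⋃ (_ : i < θ), M i) (hcof : #S < θ.cof) :
    ∃ i < θ, S ⊆ M i := by
  have hmem : ∀ x : S, ∃ i < θ, (x : α) ∈ M i := fun x => by simpa using hS x.2
  choose f hfθ hfM using hmem
  have hsup : ⨆ x, f x < θ := Ordinal.iSup_lt_of_lt_cof hcof hfθ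
  refine ⟨⨆ x, f x, hsup, fun x hx => ?_⟩
  exact hM (hfθ ⟨x, hx⟩) hsup (Ordinal.le_iSup f ⟨x, hx⟩) (hfM ⟨x, hx⟩)

theorem biUnion_lt_add_one_eq_of_monotoneOn {j : Ordinal.{u}}
    (hM : MonotoneOn M (Iio (j + 1))) :
    ⋃ i, ⋃ (_ : i < j + 1), M i = M j := by
  have hj : j < j + 1 := Order.lt_add_one_iff.mpr le_rfl
  refine subset_antisymm (iUnion₂_subset fun i hi => ?_) (subset_biUnion_of_mem (u := M) hj)
  exact hM hi hj (Order.lt_add_one_iff.mp hi)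

theorem exists_subset_of_subset_biUnion_succ_ord {μ : Cardinal.{u}}
    (hM : MonotoneOn M (Iio (Order.succ μ).ord))
    (hS : S ⊆ ⋃ i, ⋃ (_ : i < (Order.succ μ).ord), M i)
    (hSμ : #S ≤ μ) : ∃ i < (Order.succ μ).ord, S ⊆ M i := by
  rcases lt_or_ge μ ℵ₀ with hfin | hinf
  · obtain ⟨n, rfl⟩ := lt_aleph0.mp hfin
    have htop : (Order.succ (n : Cardinal)).ord = (n : Ordinal) + 1 := by
      rw [succ_natCast, ← Nat.cast_add_one, ord_natCast, Nat.cast_add_one]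
    rw [htop] at hM hS ⊢
    exact ⟨n, Order.lt_add_one_iff.mpr le_rfl,
      hS.trans (biUnion_lt_add_one_eq_of_monotoneOn hM).subset⟩
  · refine exists_subset_of_subset_biUnion_of_mk_lt_cof hM hS ?_
    rw [(isRegular_succ hinf).cof_ord]
    exact hSμ.trans_lt (Order.lt_succ μ)

end ChainUnion

namespace AEC

variable {K : AEC.{u}} {μ : Cardinal.{u}} {a : K.Ω} {U N : Set K.Ω}

theorem Splits.exists_small_witnesses (h : K.Splits μ a U N) :
    ∃ N₁ N₂ : Set K.Ω, #N₁ = μ ∧ #N₂ = μ ∧ N₁ ⊆ U ∧ N₂ ⊆ U ∧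
      ∀ P, K.strong P U → N₁ ⊆ P → N₂ ⊆ P → K.Splits μ a P N := by
  obtain ⟨N₁, N₂, g, hg, hN₁, hN₂, h₁U, h₂U, hc₁, hc₂, hsub₁, hsub₂, hfix, himg, hne⟩ := h
  refine ⟨N₁, N₂, hc₁, hc₂, K.strong_sub _ _ h₁U, K.strong_sub _ _ h₂U, fun P hPU h₁P h₂P => ?_⟩
  exact ⟨N₁, N₂, g, hg, hN₁, hN₂, K.coherence _ _ _ h₁U hPU h₁P, K.coherence _ _ _ h₂U hPU h₂P,
    hc₁, hc₂, hsub₁, hsub₂, hfix, himg, hne⟩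

end AEC

theorem nonsplitting_in_union_general (K : AEC.{u}) (μ : Cardinal.{u})
    (M : Ordinal.{u} → Set K.Ω)
    (hmem : ∀ i, i < (Order.succ μ).ord → M i ∈ K.Model ∧ #(M i) = μ)
    (hincr : ∀ i j, i < j → j < (Order.succ μ).ord → K.strong (M i) (M j))
    (N : Set K.Ω)
    (a : K.Ω)
    (hns : ∀ i, i < (Order.succ μ).ord → ¬ K.Splits μ a (M i) N) :
    ¬ K.Splits μ a (⋃ i, ⋃ (_ : i < (Order.succ μ).ord), M i) N := by
  set θ := (Order.succ μ).ord
  have hθ : θ ≠ 0 := ord_eq_zero.not.mpr (Order.succ_ne_bot μ)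
  have hmono : MonotoneOn M (Iio θ) := fun i _ j hj hij =>
    hij.eq_or_lt.elim (fun h => h ▸ subset_rfl) fun h => K.strong_sub _ _ (hincr i j h hj)
  have hMU := (K.union_strong θ M hθ (fun i hi => (hmem i hi).1) hincr).2
  intro hsplit
  obtain ⟨N₁, N₂, hc₁, hc₂, h₁U, h₂U, hdescend⟩ := hsplit.exists_small_witnesses
  obtain ⟨i, hi, h₁i⟩ := exists_subset_of_subset_biUnion_succ_ord hmono h₁U hc₁.le
  obtain ⟨j, hj, h₂j⟩ := exists_subset_of_subset_biUnion_succ_ord hmono h₂U hc₂.le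
  have hk : max i j < θ := max_lt hi hj
  exact hns _ hk <| hdescend _ (hMU _ hk) (h₁i.trans (hmono hi hk (le_max_left i j)))
    (h₂j.trans (hmono hj hk (le_max_right i j)))

/-- **Observation.**  Let `K` be an AEC satisfying JEP and AP.  Let
`⟨M^i | i < μ⁺⟩` be an increasing chain of models of cardinality `μ`, let
`N ≺_K M^0`, and suppose `tp(a/M^i)` does not `μ`-split over `N` for every
`i < μ⁺`.  Then `tp(a/⋃_{i<μ⁺} M^i)` does not `μ`-split over `N`. -/
theorem nonsplitting_in_union (K : AEC.{u}) (μ : Cardinal.{u})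
    (hJEP : K.JEP) (hAP : K.AP)
    (M : Ordinal.{u} → Set K.Ω)
    (hmem : ∀ i, i < (Order.succ μ).ord → M i ∈ K.Model ∧ #(M i) = μ)
    (hincr : ∀ i j, i < j → j < (Order.succ μ).ord → K.strong (M i) (M j))
    (N : Set K.Ω) (hN : K.strong N (M 0))
    (a : K.Ω)
    (hns : ∀ i, i < (Order.succ μ).ord → ¬ K.Splits μ a (M i) N) :
    ¬ K.Splits μ a (⋃ i, ⋃ (_ : i < (Order.succ μ).ord), M i) N :=
  nonsplitting_in_union_general K μ M hmem hincr N a hns
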